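/- The constraint reduction relation on deducibility constraint systems terminates: there is no infinite sequence C₁ ⤳ C₂ ⤳ C₃ ⤳ ⋯ of reductions, where the reduction rules are C1 (unify the right side of a right-constraint with a left-side member and apply the mgu, deleting the constraint), C2 (split a right-constraint with right side f(M,N), f a constructor, into two right-constraints with right sides M and N), C3 (replace a proper constraint with the corresponding right-constraint), C4 (replace a pair ⟨M,N⟩ on the left of a proper constraint by M and N), and C5 (replace an encryption {M}N on the left of a proper constraint by M and N, adding a new right-constraint Σ, {M}N ⊩_R? N). -/

import Mathlib

/-- Dolev-Yao messages with variables. -/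
inductive MsgV : Type
  | name : ℕ → MsgV
  | var  : ℕ → MsgV
  | pair : MsgV → MsgV → MsgV
  | enc  : MsgV → MsgV → MsgV
  deriving DecidableEq

open MsgV

/-- Homomorphic extension of a substitution to messages. -/
def substT (θ : ℕ → MsgV) : MsgV → MsgV
  | name a => name a
  | var x => θ x
  | pair m n => pair (substT θ m) (substT θ n)
  | enc m k => enc (substT θ m) (substT θ k)

/-- Composition of substitutions: `comp θ ρ` applies θ first, then ρ. -/
def comp (θ ρ : ℕ → MsgV) : ℕ → MsgV := fun x => substT ρ (θ x)

/-- Variables occurring in a message. -/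
def varsT : MsgV → Finset ℕ
  | name _ => ∅
  | var x => {x}
  | pair m n => varsT m ∪ varsT n
  | enc m k => varsT m ∪ varsT k

/-- Variables occurring in a finite set of messages. -/
def varsS (S : Finset MsgV) : Finset ℕ := S.biUnion varsT

/-- Ground (variable-free) messages. -/
def groundT (m : MsgV) : Prop := varsT m = ∅

/-- Ground substitutions. -/
def groundSub (θ : ℕ → MsgV) : Prop := ∀ x, groundT (θ x)

/-- The Dolev-Yao sequent calculus (rules id, p_L, p_R, e_L, e_R). -/
inductive SC : Finset MsgV → MsgV → Prop
  | id {Γ M} : M ∈ Γ → SC Γ M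
  | pR {Γ M N} : SC Γ M → SC Γ N → SC Γ (pair M N)
  | eR {Γ M K} : SC Γ M → SC Γ K → SC Γ (enc M K)
  | pL {Γ M N T} : pair M N ∈ Γ →
      SC (insert M (insert N Γ)) T → SC Γ T
  | eL {Γ M K T} : enc M K ∈ Γ → SC Γ K →
      SC (insert M (insert K Γ)) T → SC Γ T

/-- Right-deducibility: derivability using only id, p_R, e_R. -/
inductive SCR : Finset MsgV → MsgV → Prop
  | id {Γ M} : M ∈ Γ → SCR Γ M
  | pR {Γ M N} : SCR Γ M → SCR Γ N → SCR Γ (pair M N)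
  | eR {Γ M K} : SCR Γ M → SCR Γ K → SCR Γ (enc M K)

/-- Deducibility constraints: proper (Σ ⊩? M) or right (Σ ⊩_R? M). -/
inductive Constraint : Type
  | proper : Finset MsgV → MsgV → Constraint
  | rightc : Finset MsgV → MsgV → Constraint
  deriving DecidableEq

/-- Left side of a constraint. -/
def Constraint.lhs : Constraint → Finset MsgV
  | .proper S _ => S
  | .rightc S _ => S

/-- Right side of a constraint. -/
def Constraint.rhs : Constraint → MsgV
  | .proper _ M => M
  | .rightc _ M => M

/-- Applying a substitution to a constraint. -/
def csub (θ : ℕ → MsgV) : Constraint → Constraint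
  | .proper S M => .proper (S.image (substT θ)) (substT θ M)
  | .rightc S M => .rightc (S.image (substT θ)) (substT θ M)

/-- A ground substitution satisfies a single constraint. -/
def holds (θ : ℕ → MsgV) : Constraint → Prop
  | .proper S M => SC (S.image (substT θ)) (substT θ M)
  | .rightc S M => SCR (S.image (substT θ)) (substT θ M)

/-- A solution of a list of constraints: a ground substitution satisfying
every constraint in the list. -/
def Solution (θ : ℕ → MsgV) (C : List Constraint) : Prop :=
  groundSub θ ∧ ∀ c ∈ C, holds θ c

/-- θ unifies M and N. -/
def Unifies (θ : ℕ → MsgV) (M N : MsgV) : Prop := substT θ M = substT θ N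

/-- θ is the most general unifier of M and N (variable-conservative, as is
standard: it only moves variables of M and N, within those variables). -/
def IsMGU (θ : ℕ → MsgV) (M N : MsgV) : Prop :=
  Unifies θ M N ∧
  (∀ σ, Unifies σ M N → ∃ ρ, ∀ x, σ x = substT ρ (θ x)) ∧
  (∀ x, θ x ≠ var x → x ∈ varsT M ∪ varsT N ∧ varsT (θ x) ⊆ varsT M ∪ varsT N)

/-- The identity substitution. -/
def idSub : ℕ → MsgV := fun x => var x

/-- One-step constraint reduction (rules C1–C5), labelled by the associated
substitution. -/
inductive Red : List Constraint → (ℕ → MsgV) → List Constraint → Prop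
  | c1 {C₁ C₂ : List Constraint} {S : Finset MsgV} {M N : MsgV} {θ : ℕ → MsgV} :
      (∀ x, M ≠ var x) → N ∈ S → IsMGU θ M N →
      Red (C₁ ++ Constraint.rightc S M :: C₂) θ
          (C₁.map (csub θ) ++ C₂.map (csub θ))
  | c2p {C₁ C₂ : List Constraint} {S : Finset MsgV} {M N : MsgV} :
      Red (C₁ ++ Constraint.rightc S (pair M N) :: C₂) idSub
          (C₁ ++ Constraint.rightc S M :: Constraint.rightc S N :: C₂)
  | c2e {C₁ C₂ : List Constraint} {S : Finset MsgV} {M N : MsgV} :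
      Red (C₁ ++ Constraint.rightc S (enc M N) :: C₂) idSub
          (C₁ ++ Constraint.rightc S M :: Constraint.rightc S N :: C₂)
  | c3 {C₁ C₂ : List Constraint} {S : Finset MsgV} {M : MsgV} :
      Red (C₁ ++ Constraint.proper S M :: C₂) idSub
          (C₁ ++ Constraint.rightc S M :: C₂)
  | c4 {C₁ C₂ : List Constraint} {S : Finset MsgV} {M N U : MsgV} :
      pair M N ∉ S →
      Red (C₁ ++ Constraint.proper (insert (pair M N) S) U :: C₂) idSub
          (C₁ ++ Constraint.proper (insert M (insert N S)) U :: C₂)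
  | c5 {C₁ C₂ : List Constraint} {S : Finset MsgV} {M N U : MsgV} :
      enc M N ∉ S →
      Red (C₁ ++ Constraint.proper (insert (enc M N) S) U :: C₂) idSub
          (C₁ ++ Constraint.rightc (insert (enc M N) S) N ::
                Constraint.proper (insert M (insert N S)) U :: C₂)

/-- Multi-step constraint reduction, accumulating the composed substitution. -/
inductive RedStar : List Constraint → (ℕ → MsgV) → List Constraint → Prop
  | refl (C) : RedStar C idSub C
  | step {C θ C' σ C''} : Red C θ C' → RedStar C' σ C'' →
      RedStar C (comp θ σ) C''

/-- Solved form: every constraint is Σ ⊩_R? x with x a variable. -/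
def Solved (C : List Constraint) : Prop :=
  ∀ c ∈ C, ∃ (S : Finset MsgV) (x : ℕ), c = Constraint.rightc S (var x)

/-- The i-th constraint of a list (with a default). -/
def nth (C : List Constraint) (i : ℕ) : Constraint :=
  C.getD i (Constraint.proper ∅ (name 0))

/-- Deducibility constraint systems (Definition 6.5 of the paper):
(1) for i < j and every solution θ of the prefix before position j, the
θ-instance of the part of the j-th left side whose variables all occur in the
i-th left side deduces the θ-instance of every member of the i-th left side;
(2) every variable first occurs on the right side of a constraint whose left
side does not contain it. -/
def DCSystem (C : List Constraint) : Prop :=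
  (∀ i j, i < j → j < C.length →
      ∀ θ, Solution θ (C.take j) →
        ∀ N ∈ (nth C i).lhs,
          SC ((((nth C j).lhs).filter
                (fun m => varsT m ⊆ varsS ((nth C i).lhs))).image (substT θ))
             (substT θ N)) ∧
  (∀ x, (∃ c ∈ C, x ∈ varsT c.rhs ∪ varsS c.lhs) →
      ∃ i, i < C.length ∧ x ∈ varsT ((nth C i).rhs) ∧
           x ∉ varsS ((nth C i).lhs) ∧
           ∀ j < i, x ∉ varsT ((nth C j).rhs) ∪ varsS ((nth C j).lhs))

/-!
Every reduction decreases, lexicographically, the number of variables of the system, then the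
sum over proper constraints of `1 + ` the total size of their left side, then the total size of
the right sides of right-constraints. The only delicate rule is C1. If its mgu `θ` is a renaming,
sizes are preserved and a right-constraint disappears. Otherwise `θ` eliminates a variable:
unification yields an idempotent unifier `η` with `θ = ρ ∘ η`, and since `θ` is most general also
`η = ρ' ∘ θ`; hence `ρ` sends the variables in the range of `η` to variables, while that range
omits the variable which `η` (like `θ`) maps to a non-variable.
-/

namespace MsgV

def size : MsgV → ℕ
  | name _ | var _ => 1
  | pair m n | enc m n => m.size + n.size + 1

lemma size_pos (m : MsgV) : 0 < m.size := by
  cases m <;> simp [size]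

end MsgV

section Substitution

lemma substT_congr {θ ρ : ℕ → MsgV} {m : MsgV} (h : ∀ v ∈ varsT m, θ v = ρ v) :
    substT θ m = substT ρ m := by
  induction m <;> simp_all [substT, varsT]

lemma substT_idSub (m : MsgV) : substT idSub m = m := by
  induction m <;> simp_all [substT, idSub]

lemma substT_comp (θ ρ : ℕ → MsgV) (m : MsgV) :
    substT (comp θ ρ) m = substT ρ (substT θ m) := by
  induction m <;> simp_all [substT, comp]

lemma comp_assoc (θ ρ τ : ℕ → MsgV) : comp (comp θ ρ) τ = comp θ (comp ρ τ) := by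
  funext x
  simp only [comp, substT_comp]

lemma varsT_substT (θ : ℕ → MsgV) (m : MsgV) :
    varsT (substT θ m) = (varsT m).biUnion fun v => varsT (θ v) := by
  induction m <;> simp_all [substT, varsT, Finset.union_biUnion]

lemma exists_eq_var_of_substT_eq_var {σ : ℕ → MsgV} {m : MsgV} {v : ℕ}
    (h : substT σ m = var v) : ∃ w, m = var w := by
  cases m <;> simp_all [substT]

lemma size_apply_le_size_substT (σ : ℕ → MsgV) {x : ℕ} {m : MsgV} (hx : x ∈ varsT m) :
    (σ x).size ≤ (substT σ m).size := by
  induction m with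
  | name => simp [varsT] at hx
  | var y => simp_all [varsT, substT]
  | pair a b iha ihb | enc a b iha ihb =>
    simp only [varsT, Finset.mem_union] at hx
    simp only [substT, MsgV.size]
    rcases hx with hx | hx
    · have := iha hx; omega
    · have := ihb hx; omega

lemma eq_var_of_apply_eq_substT {σ : ℕ → MsgV} {x : ℕ} {t : MsgV}
    (h : σ x = substT σ t) (hx : x ∈ varsT t) : t = var x := by
  cases t with
  | name => simp [varsT] at hx
  | var y => simp_all [varsT]
  | pair a b | enc a b =>
    have hsize := congrArg MsgV.size h
    simp only [varsT, Finset.mem_union] at hx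
    simp only [substT, MsgV.size] at hsize
    rcases hx with hx | hx <;> have := size_apply_le_size_substT σ hx <;> omega

lemma size_substT_of_forall_eq_var {θ : ℕ → MsgV} (hθ : ∀ w, ∃ u, θ w = var u) (m : MsgV) :
    (substT θ m).size = m.size := by
  induction m with
  | var x => obtain ⟨u, hu⟩ := hθ x; simp [substT, hu, MsgV.size]
  | _ => simp_all [substT, MsgV.size]

end Substitution

section Unification

def UnifiesAll (σ : ℕ → MsgV) (E : List (MsgV × MsgV)) : Prop :=
  ∀ e ∈ E, substT σ e.1 = substT σ e.2

def eqnVars (E : List (MsgV × MsgV)) : Finset ℕ :=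
  E.toFinset.biUnion fun e => varsT e.1 ∪ varsT e.2

def eqnSize (E : List (MsgV × MsgV)) : ℕ :=
  (E.map fun e => e.1.size + e.2.size).sum

def eqnMeasure (E : List (MsgV × MsgV)) : ℕ ×ₗ ℕ :=
  toLex ((eqnVars E).card, eqnSize E)

@[simp]
lemma unifiesAll_nil (σ : ℕ → MsgV) : UnifiesAll σ [] := by
  simp [UnifiesAll]

@[simp]
lemma unifiesAll_cons {σ : ℕ → MsgV} {s t : MsgV} {E : List (MsgV × MsgV)} :
    UnifiesAll σ ((s, t) :: E) ↔ substT σ s = substT σ t ∧ UnifiesAll σ E := by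
  simp [UnifiesAll]

@[simp]
lemma mem_eqnVars {z : ℕ} {E : List (MsgV × MsgV)} :
    z ∈ eqnVars E ↔ ∃ e ∈ E, z ∈ varsT e.1 ∨ z ∈ varsT e.2 := by
  simp [eqnVars]

lemma eqnMeasure_lt_of_subset {E F : List (MsgV × MsgV)} (hv : eqnVars F ⊆ eqnVars E)
    (hs : eqnSize F < eqnSize E) : eqnMeasure F < eqnMeasure E :=
  Prod.Lex.toLex_lt_toLex'.2 ⟨Finset.card_le_card hv, fun _ => hs⟩

lemma eqnVars_swap (s t : MsgV) (E : List (MsgV × MsgV)) :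
    eqnVars ((t, s) :: E) = eqnVars ((s, t) :: E) := by
  ext
  simp [or_comm]

lemma eqnMeasure_swap (s t : MsgV) (E : List (MsgV × MsgV)) :
    eqnMeasure ((t, s) :: E) = eqnMeasure ((s, t) :: E) := by
  simp only [eqnMeasure, eqnVars_swap, eqnSize, List.map_cons, List.sum_cons, add_comm t.size]

lemma eqnMeasure_lt_cons (e : MsgV × MsgV) (E : List (MsgV × MsgV)) :
    eqnMeasure E < eqnMeasure (e :: E) := by
  refine eqnMeasure_lt_of_subset (fun z hz => ?_) ?_
  · obtain ⟨e', he', hz⟩ := mem_eqnVars.1 hz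
    exact mem_eqnVars.2 ⟨e', List.mem_cons_of_mem _ he', hz⟩
  · simp only [eqnSize, List.map_cons, List.sum_cons]
    have := e.1.size_pos
    omega

lemma eqnMeasure_decompose_lt {s t a b c d : MsgV} {E : List (MsgV × MsgV)}
    (hs : varsT s = varsT a ∪ varsT b) (ht : varsT t = varsT c ∪ varsT d)
    (hsz : s.size = a.size + b.size + 1) (htz : t.size = c.size + d.size + 1) :
    eqnMeasure ((a, c) :: (b, d) :: E) < eqnMeasure ((s, t) :: E) := by
  refine eqnMeasure_lt_of_subset (fun z hz => ?_) ?_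
  · simp only [mem_eqnVars, List.mem_cons, exists_eq_or_imp, hs, ht, Finset.mem_union] at hz ⊢
    aesop
  · simp only [eqnSize, List.map_cons, List.sum_cons, hsz, htz]
    omega

lemma substT_update_of_notMem {x : ℕ} {t u : MsgV} (hx : x ∉ varsT u) :
    substT (Function.update idSub x t) u = u := by
  rw [substT_congr (ρ := idSub) fun v hv => Function.update_of_ne (by rintro rfl; exact hx hv) _ _,
    substT_idSub]

lemma comp_update_of_apply_eq {σ : ℕ → MsgV} {x : ℕ} {t : MsgV} (h : σ x = substT σ t) :
    comp (Function.update idSub x t) σ = σ := by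
  funext v
  by_cases hv : v = x
  · subst hv
    simp [comp, h]
  · simp [comp, hv, idSub, substT]

lemma varsT_substT_update_subset {x : ℕ} {t : MsgV} (hx : x ∉ varsT t) (u : MsgV) :
    varsT (substT (Function.update idSub x t) u) ⊆ (varsT u ∪ varsT t).erase x := by
  intro y hy
  obtain ⟨w, hw, hyw⟩ := Finset.mem_biUnion.1 ((varsT_substT _ u).le hy)
  by_cases hwx : w = x
  · subst hwx
    simp only [Function.update_self] at hyw
    exact Finset.mem_erase.2 ⟨by rintro rfl; exact hx hyw, Finset.mem_union_right _ hyw⟩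
  · simp_all [idSub, varsT]

lemma eqnVars_map_update_subset {x : ℕ} {t : MsgV} (hx : x ∉ varsT t) (E : List (MsgV × MsgV)) :
    eqnVars (E.map (Prod.map (substT (Function.update idSub x t))
        (substT (Function.update idSub x t)))) ⊆ (eqnVars ((var x, t) :: E)).erase x := by
  intro z hz
  obtain ⟨_, he', hz⟩ := mem_eqnVars.1 hz
  obtain ⟨e, he, rfl⟩ := List.mem_map.1 he'
  have hV : ∀ u ∈ [e.1, e.2], varsT u ∪ varsT t ⊆ eqnVars ((var x, t) :: E) := by
    intro u hu y hy
    simp only [List.mem_cons, List.not_mem_nil, or_false] at hu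
    simp only [Finset.mem_union, mem_eqnVars, List.mem_cons, exists_eq_or_imp] at hy ⊢
    aesop
  rcases hz with hz | hz <;>
    exact Finset.erase_subset_erase _ (hV _ (by simp)) (varsT_substT_update_subset hx _ hz)

lemma eqnMeasure_eliminate_lt {x : ℕ} {t : MsgV} (hx : x ∉ varsT t) (E : List (MsgV × MsgV)) :
    eqnMeasure (E.map (Prod.map (substT (Function.update idSub x t))
        (substT (Function.update idSub x t)))) < eqnMeasure ((var x, t) :: E) :=
  Prod.Lex.left _ _ <| (Finset.card_le_card (eqnVars_map_update_subset hx E)).trans_lt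
    (Finset.card_erase_lt_of_mem (mem_eqnVars.2 ⟨_, List.mem_cons_self, Or.inl (by simp [varsT])⟩))

/-- The second clause says that `η` fixes every variable of its range, i.e. `η ∘ η = η`. -/
def IsIdempotentWithin (V : Finset ℕ) (η : ℕ → MsgV) : Prop :=
  (∀ x, η x ≠ var x → varsT (η x) ⊆ V) ∧ ∀ x y, y ∈ varsT (η x) → η y = var y

namespace IsIdempotentWithin

variable {V W : Finset ℕ} {η : ℕ → MsgV}

lemma mono (h : IsIdempotentWithin V η) (hVW : V ⊆ W) : IsIdempotentWithin W η :=
  ⟨fun x hx => (h.1 x hx).trans hVW, h.2⟩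

lemma varsT_substT_subset (h : IsIdempotentWithin V η) (u : MsgV) :
    varsT (substT η u) ⊆ V ∪ varsT u := by
  intro z hz
  obtain ⟨w, hw, hz⟩ := Finset.mem_biUnion.1 ((varsT_substT η u).le hz)
  by_cases hηw : η w = var w
  · simp_all [varsT]
  · exact Finset.mem_union_left _ (h.1 w hηw hz)

lemma apply_eq_var (h : IsIdempotentWithin V η) {y : ℕ} {u : MsgV}
    (hy : y ∈ varsT (substT η u)) : η y = var y := by
  obtain ⟨w, -, hy⟩ := Finset.mem_biUnion.1 ((varsT_substT η u).le hy)
  exact h.2 w y hy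

end IsIdempotentWithin

def UnifiersFactorIdempotently (E : List (MsgV × MsgV)) : Prop :=
  ∀ σ, UnifiesAll σ E →
    ∃ η ρ, UnifiesAll η E ∧ IsIdempotentWithin (eqnVars E) η ∧ σ = comp η ρ

namespace UnifiersFactorIdempotently

lemma nil : UnifiersFactorIdempotently [] :=
  fun σ _ => ⟨idSub, σ, unifiesAll_nil _, ⟨fun _ h => absurd rfl h, fun _ _ _ => rfl⟩, rfl⟩

lemma congr {E F : List (MsgV × MsgV)} (hu : ∀ σ, UnifiesAll σ E ↔ UnifiesAll σ F)
    (hv : eqnVars E = eqnVars F) (h : UnifiersFactorIdempotently E) :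
    UnifiersFactorIdempotently F := by
  intro σ hσ
  obtain ⟨η, ρ, hη, hidem, rfl⟩ := h σ ((hu σ).2 hσ)
  exact ⟨η, ρ, (hu η).1 hη, hv ▸ hidem, rfl⟩

lemma swap {s t : MsgV} {E : List (MsgV × MsgV)}
    (h : UnifiersFactorIdempotently ((s, t) :: E)) : UnifiersFactorIdempotently ((t, s) :: E) :=
  h.congr (fun σ => by simp [eq_comm]) (eqnVars_swap t s E)

lemma cons_self {s : MsgV} {E : List (MsgV × MsgV)} (h : UnifiersFactorIdempotently E) :
    UnifiersFactorIdempotently ((s, s) :: E) := by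
  intro σ hσ
  obtain ⟨η, ρ, hη, hidem, rfl⟩ := h σ (unifiesAll_cons.1 hσ).2
  refine ⟨η, ρ, unifiesAll_cons.2 ⟨rfl, hη⟩, hidem.mono fun z hz => ?_, rfl⟩
  simp only [mem_eqnVars] at hz ⊢
  obtain ⟨e, he, hz⟩ := hz
  exact ⟨e, List.mem_cons_of_mem _ he, hz⟩

lemma of_not_unifiable {s t : MsgV} {E : List (MsgV × MsgV)}
    (h : ∀ σ, substT σ s ≠ substT σ t) : UnifiersFactorIdempotently ((s, t) :: E) :=
  fun σ hσ => absurd (unifiesAll_cons.1 hσ).1 (h σ)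

lemma eliminate {x : ℕ} {t : MsgV} {E : List (MsgV × MsgV)} (hx : x ∉ varsT t)
    (h : UnifiersFactorIdempotently (E.map (Prod.map (substT (Function.update idSub x t))
      (substT (Function.update idSub x t))))) :
    UnifiersFactorIdempotently ((var x, t) :: E) := by
  set τ := Function.update idSub x t with hτ
  intro σ hσ
  obtain ⟨hσx, hσE⟩ := unifiesAll_cons.1 hσ
  have hστ : comp τ σ = σ := comp_update_of_apply_eq hσx
  have hσE' : UnifiesAll σ (E.map (Prod.map (substT τ) (substT τ))) := by
    intro _ he'
    obtain ⟨e, he, rfl⟩ := List.mem_map.1 he'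
    simpa only [Prod.map_fst, Prod.map_snd, ← substT_comp, hστ] using hσE e he
  obtain ⟨η, ρ, hη, hidem, rfl⟩ := h σ hσE'
  have hV := eqnVars_map_update_subset hx E
  have hτx : ∀ z, x ∉ varsT (τ z) := fun z hz =>
    (Finset.mem_erase.1 (varsT_substT_update_subset hx (var z) hz)).1 rfl
  refine ⟨comp τ η, ρ, unifiesAll_cons.2 ⟨?_, fun e he => ?_⟩, ⟨fun z hz => ?_, fun z y hy => ?_⟩,
    by rw [comp_assoc, hστ]⟩
  · rw [substT_comp, substT_comp, substT_update_of_notMem hx]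
    simp [substT, hτ]
  · rw [substT_comp, substT_comp]
    exact hη _ (List.mem_map_of_mem he)
  · by_cases hzx : z = x
    · subst hzx
      refine (hidem.varsT_substT_subset (τ z)).trans (Finset.union_subset
        (hV.trans (Finset.erase_subset _ _)) fun y hy => ?_)
      simp only [hτ, Function.update_self] at hy
      exact mem_eqnVars.2 ⟨_, List.mem_cons_self, Or.inr hy⟩
    · have hηz : comp τ η z = η z := by simp [comp, hτ, hzx, idSub, substT]
      rw [hηz] at hz ⊢
      exact (hidem.1 z hz).trans (hV.trans (Finset.erase_subset _ _))
  · have hyx : y ≠ x := by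
      rintro rfl
      rcases Finset.mem_union.1 (hidem.varsT_substT_subset (τ z) hy) with hy' | hy'
      · exact (Finset.mem_erase.1 (hV hy')).1 rfl
      · exact hτx z hy'
    simpa [comp, hτ, hyx, idSub, substT] using hidem.apply_eq_var hy

lemma var_left {x : ℕ} {t : MsgV} {E : List (MsgV × MsgV)} (hne : t ≠ var x)
    (ih : ∀ F, eqnMeasure F < eqnMeasure ((var x, t) :: E) → UnifiersFactorIdempotently F) :
    UnifiersFactorIdempotently ((var x, t) :: E) := by
  by_cases hx : x ∈ varsT t
  · exact of_not_unifiable fun σ h => hne (eq_var_of_apply_eq_substT h hx)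
  · exact eliminate hx (ih _ (eqnMeasure_eliminate_lt hx E))

lemma decompose {s t a b c d : MsgV} {E : List (MsgV × MsgV)}
    (hs : varsT s = varsT a ∪ varsT b) (ht : varsT t = varsT c ∪ varsT d)
    (hu : ∀ σ, substT σ s = substT σ t ↔ substT σ a = substT σ c ∧ substT σ b = substT σ d)
    (h : UnifiersFactorIdempotently ((a, c) :: (b, d) :: E)) :
    UnifiersFactorIdempotently ((s, t) :: E) := by
  refine h.congr (fun σ => by simp [hu, and_assoc]) ?_
  ext z
  simp only [mem_eqnVars, List.mem_cons, exists_eq_or_imp, hs, ht, Finset.mem_union]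
  aesop

end UnifiersFactorIdempotently

-- Martelli–Montanari unification, by induction on (number of variables, total size).
theorem unifiersFactorIdempotently (E : List (MsgV × MsgV)) : UnifiersFactorIdempotently E := by
  refine (InvImage.wf eqnMeasure wellFounded_lt).induction E fun E ih => ?_
  replace ih : ∀ F, eqnMeasure F < eqnMeasure E → UnifiersFactorIdempotently F := ih
  obtain _ | ⟨⟨s, t⟩, E⟩ := E
  · exact .nil
  obtain rfl | hst := eq_or_ne s t
  · exact .cons_self (ih _ (eqnMeasure_lt_cons _ _))
  match s, t, hst, ih with
  | var x, t, hst, ih => exact .var_left hst.symm ih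
  | s, var x, hst, ih =>
    exact (UnifiersFactorIdempotently.var_left hst fun F hF =>
      ih F (by rwa [eqnMeasure_swap])).swap
  | pair a b, pair c d, _, ih =>
    exact .decompose rfl rfl (fun σ => by simp [substT])
      (ih _ (eqnMeasure_decompose_lt rfl rfl rfl rfl))
  | enc a b, enc c d, _, ih =>
    exact .decompose rfl rfl (fun σ => by simp [substT])
      (ih _ (eqnMeasure_decompose_lt rfl rfl rfl rfl))
  | name a, name b, hst, _ => exact .of_not_unifiable fun σ => by simpa [substT] using hst
  | name _, pair _ _, _, _ | name _, enc _ _, _, _ | pair _ _, name _, _, _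
  | pair _ _, enc _ _, _, _ | enc _ _, name _, _, _ | enc _ _, pair _ _, _, _ =>
    exact .of_not_unifiable fun σ => by simp [substT]

lemma IsMGU.exists_notMem_varsT_apply {θ : ℕ → MsgV} {M N : MsgV} (hθ : IsMGU θ M N) {x₀ : ℕ}
    (hx₀ : ∀ w, θ x₀ ≠ var w) : ∃ z ∈ varsT M ∪ varsT N, ∀ y, z ∉ varsT (θ y) := by
  set V := varsT M ∪ varsT N
  obtain ⟨η, ρ, hη, hidem, hθη⟩ := unifiersFactorIdempotently [(M, N)] θ
    (unifiesAll_cons.2 ⟨hθ.1, unifiesAll_nil _⟩)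
  replace hidem : IsIdempotentWithin V η := by
    convert hidem using 1
    ext
    simp [V]
  obtain ⟨ρ', hηθ⟩ := hθ.2.1 η (unifiesAll_cons.1 hη).1
  set A := V.biUnion fun y => varsT (η y)
  have hA : A ⊆ V.erase x₀ := by
    intro v hv
    obtain ⟨y, hy, hv⟩ := Finset.mem_biUnion.1 hv
    refine Finset.mem_erase.2 ⟨?_, ?_⟩
    · rintro rfl
      obtain ⟨w, hw⟩ := exists_eq_var_of_substT_eq_var ((hηθ v).symm.trans (hidem.2 y v hv))
      exact hx₀ w hw
    · simpa [varsT, hy] using hidem.varsT_substT_subset (var y) hv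
  have hρ : ∀ v ∈ A, (varsT (ρ v)).card ≤ 1 := by
    intro v hv
    obtain ⟨y, -, hv⟩ := Finset.mem_biUnion.1 hv
    have hηv := hidem.2 y v hv
    have hρ'ρ : substT ρ' (ρ v) = var v := by
      simpa [hθη, comp, hηv, substT] using (hηθ v).symm
    obtain ⟨w, hw⟩ := exists_eq_var_of_substT_eq_var hρ'ρ
    simp [hw, varsT]
  have hcard : (V.biUnion fun y => varsT (θ y)).card < V.card := calc
    _ = (A.biUnion fun v => varsT (ρ v)).card := by
      simp [A, hθη, comp, varsT_substT, Finset.biUnion_biUnion]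
    _ ≤ A.card * 1 := Finset.card_biUnion_le_card_mul _ _ _ hρ
    _ ≤ (V.erase x₀).card := by simpa using Finset.card_le_card hA
    _ < V.card := Finset.card_erase_lt_of_mem (hθ.2.2 x₀ (hx₀ x₀)).1
  obtain ⟨z, hzV, hz⟩ := Finset.exists_mem_notMem_of_card_lt_card hcard
  refine ⟨z, hzV, fun y hy => ?_⟩
  by_cases hyV : y ∈ V
  · exact hz (Finset.mem_biUnion.2 ⟨y, hyV, hy⟩)
  · have hθy : θ y = var y := by_contra fun h => hyV (hθ.2.2 y h).1
    simp only [hθy, varsT, Finset.mem_singleton] at hy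
    exact hyV (hy ▸ hzV)

end Unification

section Measure

def Constraint.vars (c : Constraint) : Finset ℕ := varsS c.lhs ∪ varsT c.rhs

def varsC (C : List Constraint) : Finset ℕ := C.toFinset.biUnion Constraint.vars

lemma varsS_insert (m : MsgV) (S : Finset MsgV) : varsS (insert m S) = varsT m ∪ varsS S :=
  Finset.biUnion_insert

@[simp]
lemma mem_varsC {z : ℕ} {C : List Constraint} : z ∈ varsC C ↔ ∃ c ∈ C, z ∈ c.vars := by
  simp [varsC]

lemma Constraint.vars_csub (θ : ℕ → MsgV) (c : Constraint) :
    (csub θ c).vars = c.vars.biUnion fun w => varsT (θ w) := by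
  cases c <;> simp [csub, Constraint.vars, Constraint.lhs, Constraint.rhs, varsS, varsT_substT,
    Finset.image_biUnion, Finset.biUnion_biUnion, Finset.union_biUnion]

lemma mem_varsC_map_csub {θ : ℕ → MsgV} {L : List Constraint} {y : ℕ} :
    y ∈ varsC (L.map (csub θ)) ↔ ∃ c ∈ L, ∃ w ∈ c.vars, y ∈ varsT (θ w) := by
  simp [Constraint.vars_csub]

def Constraint.properWeight : Constraint → ℕ
  | .proper S _ => 1 + ∑ m ∈ S, m.size
  | .rightc _ _ => 0

def Constraint.rightWeight : Constraint → ℕ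
  | .proper _ _ => 0
  | .rightc _ M => M.size

lemma Constraint.properWeight_csub_le {θ : ℕ → MsgV} (hθ : ∀ w, ∃ u, θ w = var u)
    (c : Constraint) : (csub θ c).properWeight ≤ c.properWeight := by
  cases c with
  | proper S M =>
    simp only [csub, Constraint.properWeight, add_le_add_iff_left]
    refine Finset.sum_image_le_of_nonneg (fun _ _ => Nat.zero_le _) |>.trans_eq ?_
    simp [size_substT_of_forall_eq_var hθ]
  | rightc S M => simp [csub, Constraint.properWeight]

lemma Constraint.rightWeight_comp_csub {θ : ℕ → MsgV} (hθ : ∀ w, ∃ u, θ w = var u) :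
    Constraint.rightWeight ∘ csub θ = Constraint.rightWeight := by
  funext c
  cases c <;> simp [csub, Constraint.rightWeight, size_substT_of_forall_eq_var hθ]

/-- Stands in for the paper's multiset of constraint measures `(1, |Σ|)` and `(0, |M|)`: one sum
over the proper constraints and one over the right-constraints, compared lexicographically. -/
def weights (C : List Constraint) : ℕ ×ₗ ℕ :=
  toLex ((C.map Constraint.properWeight).sum, (C.map Constraint.rightWeight).sum)

def reductionMeasure (C : List Constraint) : ℕ ×ₗ ℕ ×ₗ ℕ :=
  toLex ((varsC C).card, weights C)

lemma reductionMeasure_lt_of_card_lt {C C' : List Constraint}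
    (h : (varsC C').card < (varsC C).card) : reductionMeasure C' < reductionMeasure C :=
  Prod.Lex.left _ _ h

lemma reductionMeasure_lt_of_weights_lt {C C' : List Constraint} (hv : varsC C' ⊆ varsC C)
    (hw : weights C' < weights C) : reductionMeasure C' < reductionMeasure C :=
  Prod.Lex.toLex_lt_toLex'.2 ⟨Finset.card_le_card hv, fun _ => hw⟩

lemma reductionMeasure_append_lt {L L' : List Constraint} (hv : varsC L' ⊆ varsC L)
    (hw : weights L' < weights L) (C₁ C₂ : List Constraint) :
    reductionMeasure (C₁ ++ (L' ++ C₂)) < reductionMeasure (C₁ ++ (L ++ C₂)) := by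
  refine reductionMeasure_lt_of_weights_lt (fun z hz => ?_) ?_
  · obtain ⟨c, hc, hz⟩ := mem_varsC.1 hz
    simp only [List.mem_append] at hc
    rcases hc with hc | hc | hc
    · exact mem_varsC.2 ⟨c, by simp [hc], hz⟩
    · obtain ⟨c', hc', hz'⟩ := mem_varsC.1 (hv (mem_varsC.2 ⟨c, hc, hz⟩))
      exact mem_varsC.2 ⟨c', by simp [hc'], hz'⟩
    · exact mem_varsC.2 ⟨c, by simp [hc], hz⟩
  · simp only [weights, Prod.Lex.toLex_lt_toLex, List.map_append, List.sum_append] at hw ⊢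
    omega

lemma sum_size_insert_insert_lt {S : Finset MsgV} {t M N : MsgV} (ht : t ∉ S)
    (h : M.size + N.size < t.size) :
    ∑ m ∈ insert M (insert N S), m.size < ∑ m ∈ insert t S, m.size := by
  have sum_insert_le : ∀ a (s : Finset MsgV),
      ∑ m ∈ insert a s, m.size ≤ a.size + ∑ m ∈ s, m.size := by
    intro a s
    by_cases ha : a ∈ s
    · simp [Finset.insert_eq_of_mem ha]
    · rw [Finset.sum_insert ha]
  have := sum_insert_le M (insert N S)
  have := sum_insert_le N S
  rw [Finset.sum_insert ht]
  omega

end Measure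

section Reduction

lemma reductionMeasure_map_csub_lt {C₁ C₂ : List Constraint} {S : Finset MsgV} {M N : MsgV}
    {θ : ℕ → MsgV} (hN : N ∈ S) (hθ : IsMGU θ M N) :
    reductionMeasure (C₁.map (csub θ) ++ C₂.map (csub θ)) <
      reductionMeasure (C₁ ++ Constraint.rightc S M :: C₂) := by
  rw [← List.map_append]
  set C := C₁ ++ Constraint.rightc S M :: C₂
  have hC : ∀ c ∈ C₁ ++ C₂, c ∈ C := by
    intro c hc
    simp only [C, List.mem_append, List.mem_cons] at hc ⊢
    tauto
  have hV : varsT M ∪ varsT N ⊆ varsC C := fun z hz =>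
    mem_varsC.2 ⟨Constraint.rightc S M, by simp [C], by
      simp only [Constraint.vars, Constraint.lhs, Constraint.rhs, Finset.mem_union] at hz ⊢
      exact hz.elim Or.inr fun hz => Or.inl (Finset.mem_biUnion.2 ⟨N, hN, hz⟩)⟩
  have hsub : varsC ((C₁ ++ C₂).map (csub θ)) ⊆ varsC C := by
    intro y hy
    obtain ⟨c, hc, w, hw, hy⟩ := mem_varsC_map_csub.1 hy
    by_cases hθw : θ w = var w
    · simp only [hθw, varsT, Finset.mem_singleton] at hy
      subst hy
      exact mem_varsC.2 ⟨c, hC c hc, hw⟩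
    · exact hV ((hθ.2.2 w hθw).2 hy)
  by_cases hren : ∀ w, ∃ u, θ w = var u
  · refine reductionMeasure_lt_of_weights_lt hsub (Prod.Lex.toLex_lt_toLex'.2 ⟨?_, fun _ => ?_⟩)
    · have hsum := List.sum_le_sum (l := C₁ ++ C₂) fun c _ => c.properWeight_csub_le hren
      have hM : (Constraint.rightc S M).properWeight = 0 := rfl
      simp only [C, List.map_append, List.map_cons, List.map_map, List.sum_append,
        List.sum_cons, Function.comp_def, hM] at hsum ⊢
      omega
    · have hM : (Constraint.rightc S M).rightWeight = M.size := rfl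
      have := M.size_pos
      simp only [C, List.map_append, List.map_cons, List.map_map, List.sum_append,
        List.sum_cons, Constraint.rightWeight_comp_csub hren, hM]
      omega
  · push Not at hren
    obtain ⟨x₀, hx₀⟩ := hren
    obtain ⟨z, hzV, hz⟩ := hθ.exists_notMem_varsT_apply hx₀
    refine reductionMeasure_lt_of_card_lt (Finset.card_lt_card ?_)
    refine (Finset.ssubset_iff_of_subset hsub).2 ⟨z, hV hzV, fun hzC' => ?_⟩
    obtain ⟨c, -, w, -, hw⟩ := mem_varsC_map_csub.1 hzC'
    exact hz w hw

lemma Red.reductionMeasure_lt {C C' : List Constraint} {θ : ℕ → MsgV} (h : Red C θ C') :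
    reductionMeasure C' < reductionMeasure C := by
  cases h with
  | c1 _ hN hθ => exact reductionMeasure_map_csub_lt hN hθ
  | c2p | c2e =>
    refine reductionMeasure_append_lt (L := [_]) (L' := [_, _]) (fun z => ?_) ?_ _ _
    · simp [Constraint.vars, Constraint.lhs, Constraint.rhs, varsT]
      tauto
    · simp only [weights, Prod.Lex.toLex_lt_toLex, List.map_cons, List.map_nil, List.sum_cons,
        List.sum_nil, Constraint.properWeight, Constraint.rightWeight, MsgV.size]
      omega
  | c3 =>
    refine reductionMeasure_append_lt (L := [_]) (L' := [_]) (fun z => ?_) ?_ _ _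
    · simp [Constraint.vars, Constraint.lhs, Constraint.rhs]
    · simp only [weights, Prod.Lex.toLex_lt_toLex, List.map_cons, List.map_nil, List.sum_cons,
        List.sum_nil, Constraint.properWeight, Constraint.rightWeight]
      omega
  | c4 hMN =>
    refine reductionMeasure_append_lt (L := [_]) (L' := [_]) (fun z => ?_) ?_ _ _
    · simp [Constraint.vars, Constraint.lhs, Constraint.rhs, varsS_insert, varsT]
    · have := sum_size_insert_insert_lt hMN (Nat.lt_succ_self _)
      simp only [weights, Prod.Lex.toLex_lt_toLex, List.map_cons, List.map_nil, List.sum_cons,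
        List.sum_nil, Constraint.properWeight, Constraint.rightWeight]
      omega
  | c5 hMN =>
    refine reductionMeasure_append_lt (L := [_]) (L' := [_, _]) (fun z => ?_) ?_ _ _
    · simp [Constraint.vars, Constraint.lhs, Constraint.rhs, varsS_insert, varsT]
      tauto
    · have := sum_size_insert_insert_lt hMN (Nat.lt_succ_self _)
      simp only [weights, Prod.Lex.toLex_lt_toLex, List.map_cons, List.map_nil, List.sum_cons,
        List.sum_nil, Constraint.properWeight, Constraint.rightWeight]
      omega

end Reduction

/-- Termination of constraint reduction: there is no infinite reduction
sequence. -/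
theorem constraint_reduction_terminates :
    ¬ ∃ f : ℕ → List Constraint, ∀ n, ∃ θ, Red (f n) θ (f (n + 1)) := by
  rintro ⟨f, hf⟩
  refine not_strictAnti_of_wellFoundedLT (reductionMeasure ∘ f)
    (strictAnti_nat_of_succ_lt fun n => ?_)
  obtain ⟨θ, h⟩ := hf n
  exact h.reductionMeasure_lt
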